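/- arXiv:0807.3980 — 4 statements merged into one kernel-verified Lean document; each statement's English description precedes it below -/
import Mathlib

section
/- Let Γ be a discrete subgroup of SL₂(ℝ)×SL₂(ℝ) that contains an element of infinite order and that acts properly discontinuously on SL₂(ℝ) by (γ₁,γ₂)·g = γ₁gγ₂⁻¹. Then either all but finitely many (γ₁,γ₂) ∈ Γ satisfy ‖γ₂‖ < ‖γ₁‖, or all but finitely many (γ₁,γ₂) ∈ Γ satisfy ‖γ₁‖ < ‖γ₂‖. -/
/-!
STATEMENT 4: if a discrete subgroup Γ of SL₂(ℝ)×SL₂(ℝ) contains an element of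
infinite order and acts properly discontinuously on SL₂(ℝ) by (γ₁,γ₂)·g = γ₁gγ₂⁻¹,
then either almost all (γ₁,γ₂) ∈ Γ satisfy ‖γ₂‖ < ‖γ₁‖, or almost all satisfy
‖γ₁‖ < ‖γ₂‖.
-/

open Matrix

/-- `SL₂(ℝ)`. -/
abbrev SL2R := Matrix.SpecialLinearGroup (Fin 2) ℝ

/-- The topology on SL₂(ℝ) as a subset of the 2×2 real matrices. -/
instance : TopologicalSpace SL2R :=
  TopologicalSpace.induced (fun g => (g : Matrix (Fin 2) (Fin 2) ℝ)) inferInstance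

/-- The operator norm of `g ∈ SL₂(ℝ)` acting on Euclidean ℝ². -/
noncomputable def sl2OpNorm (g : SL2R) : ℝ :=
  ‖Matrix.toEuclideanCLM (𝕜 := ℝ) (g : Matrix (Fin 2) (Fin 2) ℝ)‖

/-!
Write `μ g = log ‖g‖` and `f γ = μ γ₁ - μ γ₂`. The Cartan decomposition
`g = k · diag(eᵗ, e⁻ᵗ) · k'` (`k, k' ∈ SO(2)`, `t ≥ 0`) shows that `μ g = t`, that
`μ g⁻¹ = μ g`, and that for every `γ` some `x` with `μ x = |f γ|` has `γ₁ x γ₂⁻¹ ∈ SO(2)`;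
so proper discontinuity says exactly that `|f| → ∞` along the cofinite filter of `Γ`.
Subadditivity of `μ` makes `f` move by at most `μ δ₁ + μ δ₂` under right multiplication by `δ`.
Hence along the powers of an element `g` of infinite order, `f (gⁿ)` tends to `+∞` or to `-∞`,
with the same sign as `n → ±∞` because `f (g⁻ⁿ) = f (gⁿ)`; say `+∞`. Walking from `γ` with
`f γ ≤ 0` along `γ gᵏ` until `f` first becomes positive puts `γ` in a coset `δ ⟨g⟩` with
`|f δ| ≤ μ g₁ + μ g₂`. There are finitely many such `δ`, and each coset contains only finitely
many elements with `f ≤ 0`.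
-/

open Filter Real
open scoped Matrix.Norms.L2Operator

theorem Int.pos_of_le_of_abs_gt_of_sub_le {u : ℤ → ℝ} {c : ℝ} {n₀ : ℤ}
    (hstep : ∀ n, u n - c ≤ u (n + 1)) (hgap : ∀ n ≥ n₀, c < |u n|) (h₀ : 0 < u n₀) :
    ∀ n ≥ n₀, 0 < u n := by
  intro n hn
  induction n, hn using Int.leInduction with
  | base => exact h₀
  | succ n hn ih =>
    have := hgap n hn
    rw [abs_of_pos ih] at this
    linarith [hstep n]

theorem tendsto_atTop_or_atBot_of_abs_sub_le {u : ℤ → ℝ} {c : ℝ}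
    (hstep : ∀ n, |u (n + 1) - u n| ≤ c) (habs : Tendsto (fun n => |u n|) atTop atTop) :
    Tendsto u atTop atTop ∨ Tendsto u atTop atBot := by
  obtain ⟨n₀, hn₀⟩ := eventually_atTop.1 (habs.eventually_gt_atTop c)
  have hc : 0 ≤ c := (abs_nonneg _).trans (hstep 0)
  rcases lt_or_gt_of_ne (abs_pos.1 (hc.trans_lt (hn₀ n₀ le_rfl))) with hneg | hpos
  · right
    have : ∀ n ≥ n₀, 0 < -u n := Int.pos_of_le_of_abs_gt_of_sub_le (c := c)
      (fun n => by linarith [(abs_le.1 (hstep n)).2]) (fun n hn => by simpa using hn₀ n hn)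
      (neg_pos.2 hneg)
    refine (tendsto_neg_atTop_atBot.comp habs).congr' (eventually_atTop.2 ⟨n₀, fun n hn => ?_⟩)
    simp [abs_of_neg (neg_pos.1 (this n hn))]
  · left
    have : ∀ n ≥ n₀, 0 < u n := Int.pos_of_le_of_abs_gt_of_sub_le
      (fun n => by linarith [(abs_le.1 (hstep n)).1]) hn₀ hpos
    exact habs.congr' (eventually_atTop.2 ⟨n₀, fun n hn => abs_of_pos (this n hn)⟩)

section QuasiInvariant

variable {G : Type*} [Group G] {f N : G → ℝ}

theorem abs_apply_mul_left_sub_le (hR : ∀ γ δ, |f (γ * δ) - f γ| ≤ N δ)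
    (hinv : ∀ γ, f γ⁻¹ = f γ) (γ δ : G) : |f (δ * γ) - f γ| ≤ N δ⁻¹ := by
  have := hR γ⁻¹ δ⁻¹
  rwa [← _root_.mul_inv_rev, hinv, hinv] at this

theorem tendsto_apply_zpow_atTop_or_atBot (hR : ∀ γ δ, |f (γ * δ) - f γ| ≤ N δ)
    (hinv : ∀ γ, f γ⁻¹ = f γ) (hf : Tendsto (fun γ => |f γ|) cofinite atTop) {g : G}
    (hg : ¬IsOfFinOrder g) :
    Tendsto (fun n : ℤ => f (g ^ n)) cofinite atTop ∨
      Tendsto (fun n : ℤ => f (g ^ n)) cofinite atBot := by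
  have hsymm : ∀ {l : Filter ℝ}, Tendsto (fun n : ℤ => f (g ^ n)) atTop l →
      Tendsto (fun n : ℤ => f (g ^ n)) cofinite l := fun h => by
    rw [Int.cofinite_eq, tendsto_sup]
    refine ⟨?_, h⟩
    simpa [Function.comp_def, hinv] using h.comp tendsto_neg_atBot_atTop
  have habs : Tendsto (fun n : ℤ => |f (g ^ n)|) atTop atTop :=
    (hf.comp (injective_zpow_iff_not_isOfFinOrder.2 hg).tendsto_cofinite).mono_left
      (Int.cofinite_eq ▸ le_sup_right)
  exact (tendsto_atTop_or_atBot_of_abs_sub_le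
    (fun n => by simpa [_root_.zpow_add_one] using hR (g ^ n) g) habs).imp hsymm hsymm

theorem finite_setOf_nonpos_of_tendsto_zpow (hR : ∀ γ δ, |f (γ * δ) - f γ| ≤ N δ)
    (hinv : ∀ γ, f γ⁻¹ = f γ) (hf : Tendsto (fun γ => |f γ|) cofinite atTop) {g : G}
    (hg : Tendsto (fun n : ℤ => f (g ^ n)) cofinite atTop) : {γ | f γ ≤ 0}.Finite := by
  have hL := abs_apply_mul_left_sub_le hR hinv
  have hpow : ∀ C, {n : ℤ | f (g ^ n) ≤ C}.Finite := fun C => by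
    simpa using eventually_cofinite.1 (hg.eventually_gt_atTop C)
  have hF : {δ | |f δ| ≤ N g}.Finite := by
    simpa using eventually_cofinite.1 (hf.eventually_gt_atTop (N g))
  refine (hF.biUnion fun δ _ => (hpow (N δ⁻¹)).image fun n => δ * g ^ n).subset ?_
  intro γ (hγ : f γ ≤ 0)
  obtain ⟨m, hm⟩ : ∃ m : ℕ, 0 < f (γ * g ^ (m : ℤ)) := by
    obtain ⟨m, hm⟩ := ((hpow (N γ⁻¹)).preimage Nat.cast_injective.injOn).exists_notMem
    have : N γ⁻¹ < f (g ^ (m : ℤ)) := not_le.1 hm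
    exact ⟨m, by linarith [(abs_le.1 (hL (g ^ (m : ℤ)) γ)).1]⟩
  obtain ⟨k, hk, hk1⟩ := Nat.exists_not_and_succ_of_not_zero_of_exists
    (p := fun k : ℕ => 0 < f (γ * g ^ (k : ℤ))) (by simpa using hγ) ⟨m, hm⟩
  set δ := γ * g ^ ((k : ℤ) + 1)
  have hδ : |f δ| ≤ N g := by
    have := hR (γ * g ^ (k : ℤ)) g
    rw [mul_assoc, ← _root_.zpow_add_one] at this
    push_cast at hk1
    rw [abs_of_pos hk1]
    linarith [(abs_le.1 this).2, not_lt.1 hk]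
  have hγδ : δ * g ^ (-((k : ℤ) + 1)) = γ := by
    rw [mul_assoc, ← _root_.zpow_add, add_neg_cancel, zpow_zero, mul_one]
  refine Set.mem_biUnion hδ ⟨-((k : ℤ) + 1), ?_, hγδ⟩
  show f (g ^ _) ≤ N δ⁻¹
  linarith [(abs_le.1 (hL (g ^ (-((k : ℤ) + 1))) δ)).1, hγδ ▸ hγ]

theorem finite_setOf_nonpos_or_finite_setOf_nonneg (hR : ∀ γ δ, |f (γ * δ) - f γ| ≤ N δ)
    (hinv : ∀ γ, f γ⁻¹ = f γ) (hf : Tendsto (fun γ => |f γ|) cofinite atTop) {g : G}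
    (hg : ¬IsOfFinOrder g) : {γ | f γ ≤ 0}.Finite ∨ {γ | 0 ≤ f γ}.Finite := by
  refine (tendsto_apply_zpow_atTop_or_atBot hR hinv hf hg).imp
    (finite_setOf_nonpos_of_tendsto_zpow hR hinv hf) fun h => ?_
  have hR' : ∀ γ δ, |-f (γ * δ) - -f γ| ≤ N δ := fun γ δ => by
    rw [← abs_neg]; simpa [add_comm, sub_eq_add_neg] using hR γ δ
  simpa using finite_setOf_nonpos_of_tendsto_zpow (f := fun γ => -f γ) hR'
    (fun γ => by simp [hinv]) (by simpa using hf) (tendsto_neg_atBot_atTop.comp h)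

end QuasiInvariant

namespace SL2R

/-- `rw [SpecialLinearGroup.coe_mul]` does not fire through the abbreviation `SL2R`. -/
lemma coe_mul (a b : SL2R) : ((a * b : SL2R) : Matrix (Fin 2) (Fin 2) ℝ) = a * b := rfl

lemma sl2OpNorm_eq_norm (g : SL2R) : sl2OpNorm g = ‖(g : Matrix (Fin 2) (Fin 2) ℝ)‖ := rfl

lemma sl2OpNorm_mul_le (g h : SL2R) : sl2OpNorm (g * h) ≤ sl2OpNorm g * sl2OpNorm h :=
  norm_mul_le (g : Matrix (Fin 2) (Fin 2) ℝ) h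

lemma isCompact_setOf_sl2OpNorm_le (R : ℝ) : IsCompact {g : SL2R | sl2OpNorm g ≤ R} := by
  have : Topology.IsClosedEmbedding (fun g : SL2R => (g : Matrix (Fin 2) (Fin 2) ℝ)) :=
    (isClosed_eq continuous_id.matrix_det continuous_const).isClosedEmbedding_subtypeVal
  simpa [Set.preimage, sl2OpNorm_eq_norm] using
    this.isCompact_preimage (isCompact_closedBall (0 : Matrix (Fin 2) (Fin 2) ℝ) R)

lemma coe_inv_eq_star {k : SL2R} (hk : (k : Matrix (Fin 2) (Fin 2) ℝ) ∈ orthogonalGroup (Fin 2) ℝ) :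
    ((k⁻¹ : SL2R) : Matrix (Fin 2) (Fin 2) ℝ) = star (k : Matrix (Fin 2) (Fin 2) ℝ) :=
  calc ((k⁻¹ : SL2R) : Matrix (Fin 2) (Fin 2) ℝ)
      = ((k⁻¹ : SL2R) : Matrix (Fin 2) (Fin 2) ℝ) * (k * star (k : Matrix (Fin 2) (Fin 2) ℝ)) := by
        rw [Unitary.mul_star_self_of_mem hk, mul_one]
    _ = star (k : Matrix (Fin 2) (Fin 2) ℝ) := by
        rw [← mul_assoc, ← coe_mul, inv_mul_cancel]; exact one_mul _

def SO2 : Subgroup SL2R where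
  carrier := {k | (k : Matrix (Fin 2) (Fin 2) ℝ) ∈ orthogonalGroup (Fin 2) ℝ}
  mul_mem' ha hb := by rw [Set.mem_ofPred, coe_mul]; exact Submonoid.mul_mem _ ha hb
  one_mem' := (orthogonalGroup (Fin 2) ℝ).one_mem
  inv_mem' hk := by rw [Set.mem_ofPred, coe_inv_eq_star hk]; exact Unitary.star_mem hk

lemma mem_SO2_iff {k : SL2R} :
    k ∈ SO2 ↔ (k : Matrix (Fin 2) (Fin 2) ℝ)ᵀ * k = 1 := mem_orthogonalGroup_iff' ..

lemma sl2OpNorm_of_mem_SO2 {k : SL2R} (hk : k ∈ SO2) : sl2OpNorm k = 1 := by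
  rw [sl2OpNorm_eq_norm]; exact CStarRing.norm_of_mem_unitary hk

noncomputable def diagExp (t : ℝ) : SL2R :=
  ⟨diagonal ![exp t, exp (-t)], by simp [← exp_add]⟩

lemma diagExp_add (s t : ℝ) : diagExp (s + t) = diagExp s * diagExp t := by
  refine Subtype.ext ?_
  change diagonal _ = diagonal _ * diagonal _
  rw [diagonal_mul_diagonal]
  congr 1; ext i; fin_cases i <;> simp [exp_add, mul_comm]

lemma diagExp_neg (t : ℝ) : diagExp (-t) = (diagExp t)⁻¹ := by
  refine eq_inv_of_mul_eq_one_left ?_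
  rw [← diagExp_add, neg_add_cancel]
  ext i j; fin_cases i <;> fin_cases j <;> simp [diagExp]

lemma sl2OpNorm_diagExp (t : ℝ) : sl2OpNorm (diagExp t) = exp |t| := by
  rw [sl2OpNorm_eq_norm, diagExp, l2_opNorm_diagonal]
  simp only [Pi.norm_def, Fin.univ_succ]
  simp [abs_of_pos (exp_pos _), abs_eq_max_neg, exp_monotone.map_max]

lemma sl2OpNorm_mul_diagExp_mul {k k' : SL2R} (hk : k ∈ SO2) (hk' : k' ∈ SO2) (t : ℝ) :
    sl2OpNorm (k * diagExp t * k') = exp |t| := by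
  rw [sl2OpNorm_eq_norm, coe_mul, coe_mul, CStarRing.norm_mul_mem_unitary _ hk',
    CStarRing.norm_mem_unitary_mul _ hk, ← sl2OpNorm_eq_norm, sl2OpNorm_diagExp]

noncomputable def rot (θ : ℝ) : SL2R :=
  ⟨!![cos θ, -sin θ; sin θ, cos θ], by simp [det_fin_two_of, ← sq]⟩

lemma rot_mem_SO2 (θ : ℝ) : rot θ ∈ SO2 := by
  rw [mem_SO2_iff]
  ext i j; fin_cases i <;> fin_cases j <;> simp [rot, mul_apply, Fin.sum_univ_two, ← sq] <;> ring


theorem exists_rot_diagonalizing (P : Matrix (Fin 2) (Fin 2) ℝ) (hP : P 1 0 = P 0 1) :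
    ∃ θ, ((rot θ : Matrix (Fin 2) (Fin 2) ℝ)ᵀ * P * rot θ) 0 1 = 0 ∧
      ((rot θ : Matrix (Fin 2) (Fin 2) ℝ)ᵀ * P * rot θ) 1 1 ≤
        ((rot θ : Matrix (Fin 2) (Fin 2) ℝ)ᵀ * P * rot θ) 0 0 := by
  -- `2θ = arg z` kills the off-diagonal entry and makes the diagonal gap equal to `‖z‖ ≥ 0`.
  set z : ℂ := ⟨P 0 0 - P 1 1, 2 * P 0 1⟩
  have hre : ‖z‖ * cos z.arg = P 0 0 - P 1 1 := Complex.norm_mul_cos_arg z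
  have him : ‖z‖ * sin z.arg = 2 * P 0 1 := Complex.norm_mul_sin_arg z
  have hcos : cos z.arg = cos (z.arg / 2) ^ 2 - sin (z.arg / 2) ^ 2 := by
    rw [← cos_two_mul', mul_div_cancel₀ _ two_ne_zero]
  have hsin : sin z.arg = 2 * sin (z.arg / 2) * cos (z.arg / 2) := by
    rw [← sin_two_mul, mul_div_cancel₀ _ two_ne_zero]
  set c := cos (z.arg / 2)
  set s := sin (z.arg / 2)
  refine ⟨z.arg / 2, ?_, ?_⟩
  · simp [rot, mul_apply, Fin.sum_univ_two, hP]
    linear_combination (s * c) * hre - ((c ^ 2 - s ^ 2) / 2) * him - (‖z‖ * s * c) * hcos +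
      (‖z‖ / 2 * (c ^ 2 - s ^ 2)) * hsin
  · have : ((rot (z.arg / 2) : Matrix (Fin 2) (Fin 2) ℝ)ᵀ * P * rot (z.arg / 2)) 0 0 -
        ((rot (z.arg / 2) : Matrix (Fin 2) (Fin 2) ℝ)ᵀ * P * rot (z.arg / 2)) 1 1 = ‖z‖ := by
      simp [rot, mul_apply, Fin.sum_univ_two, hP]
      linear_combination ‖z‖ * sin_sq_add_cos_sq z.arg - ‖z‖ * cos z.arg * hcos -
        ‖z‖ * sin z.arg * hsin - (c ^ 2 - s ^ 2) * hre - 2 * c * s * him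
    linarith [norm_nonneg z]

theorem exists_mul_diagonal_exp_mem_orthogonalGroup (M : Matrix (Fin 2) (Fin 2) ℝ) (hM : M.det = 1)
    (h01 : (Mᵀ * M) 0 1 = 0) (hle : (Mᵀ * M) 1 1 ≤ (Mᵀ * M) 0 0) :
    ∃ t, 0 ≤ t ∧ M * diagonal ![exp (-t), exp t] ∈ orthogonalGroup (Fin 2) ℝ := by
  set P := Mᵀ * M
  have h10 : P 1 0 = 0 := by rw [← h01]; simp [P, mul_apply, mul_comm]
  have hdet : P 0 0 * P 1 1 = 1 := by
    have : P.det = 1 := by simp [P, hM]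
    rwa [det_fin_two, h01, h10, mul_zero, sub_zero] at this
  have hP : P = diagonal ![P 0 0, P 1 1] := by
    ext i j; fin_cases i <;> fin_cases j <;> simp [h01, h10]
  have ha : 1 ≤ P 0 0 := by
    have : 0 ≤ P 0 0 := by
      simpa [P, mul_apply, Fin.sum_univ_two] using
        add_nonneg (mul_self_nonneg (M 0 0)) (mul_self_nonneg (M 1 0))
    nlinarith
  set t := log (P 0 0) / 2
  have het : exp t * exp t = P 0 0 := by
    rw [← exp_add, add_halves, exp_log (by linarith)]
  refine ⟨t, div_nonneg (log_nonneg ha) two_pos.le, (mem_orthogonalGroup_iff' ..).2 ?_⟩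
  change (M * _)ᵀ * (M * _) = 1
  rw [transpose_mul, Matrix.mul_assoc, ← Matrix.mul_assoc Mᵀ, ← Matrix.mul_assoc]
  change _ * P * _ = 1
  rw [hP]
  simp only [diagonal_transpose, diagonal_mul_diagonal, ← diagonal_one]
  congr 1; ext i; fin_cases i <;> simp [exp_neg]
  · field_simp; linarith
  · field_simp; nlinarith

theorem exists_eq_mul_diagExp_mul (g : SL2R) :
    ∃ k ∈ SO2, ∃ t, 0 ≤ t ∧ ∃ k' ∈ SO2, g = k * diagExp t * k' := by
  have hgram : ∀ θ, ((g * rot θ : SL2R) : Matrix (Fin 2) (Fin 2) ℝ)ᵀ * (g * rot θ : SL2R) =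
      (rot θ : Matrix (Fin 2) (Fin 2) ℝ)ᵀ * ((g : Matrix (Fin 2) (Fin 2) ℝ)ᵀ * g) * rot θ := by
    intro θ; rw [coe_mul, transpose_mul]; noncomm_ring
  obtain ⟨θ, h01, hle⟩ := exists_rot_diagonalizing ((g : Matrix (Fin 2) (Fin 2) ℝ)ᵀ * g)
    (by simp [mul_apply, mul_comm])
  obtain ⟨t, ht, hk⟩ := exists_mul_diagonal_exp_mem_orthogonalGroup (g * rot θ : SL2R)
    (g * rot θ).prop (by rwa [hgram]) (by rwa [hgram])
  refine ⟨g * rot θ * diagExp (-t), ?_, t, ht, (rot θ)⁻¹, inv_mem (rot_mem_SO2 θ), by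
    rw [diagExp_neg, inv_mul_cancel_right, mul_inv_cancel_right]⟩
  have hcoe : ((g * rot θ * diagExp (-t) : SL2R) : Matrix (Fin 2) (Fin 2) ℝ) =
      (g * rot θ : SL2R) * diagonal ![exp (-t), exp t] := by
    rw [coe_mul]; simp [diagExp]
  change ((g * rot θ * diagExp (-t) : SL2R) : Matrix (Fin 2) (Fin 2) ℝ) ∈ orthogonalGroup (Fin 2) ℝ
  rwa [hcoe]

noncomputable def cartanProj (g : SL2R) : ℝ := log (sl2OpNorm g)

lemma cartanProj_mul_diagExp_mul {k k' : SL2R} (hk : k ∈ SO2) (hk' : k' ∈ SO2) (t : ℝ) :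
    cartanProj (k * diagExp t * k') = |t| := by
  rw [cartanProj, sl2OpNorm_mul_diagExp_mul hk hk', log_exp]

lemma cartanProj_of_mem_SO2 {k : SL2R} (hk : k ∈ SO2) : cartanProj k = 0 := by
  rw [cartanProj, sl2OpNorm_of_mem_SO2 hk, log_one]

lemma one_le_sl2OpNorm (g : SL2R) : 1 ≤ sl2OpNorm g := by
  obtain ⟨k, hk, t, -, k', hk', rfl⟩ := exists_eq_mul_diagExp_mul g
  rw [sl2OpNorm_mul_diagExp_mul hk hk']
  exact one_le_exp (abs_nonneg t)

lemma sl2OpNorm_pos (g : SL2R) : 0 < sl2OpNorm g :=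
  one_pos.trans_le (one_le_sl2OpNorm g)

lemma cartanProj_le_cartanProj {g h : SL2R} (hgh : sl2OpNorm g ≤ sl2OpNorm h) :
    cartanProj g ≤ cartanProj h :=
  log_le_log (sl2OpNorm_pos g) hgh

lemma cartanProj_inv (g : SL2R) : cartanProj g⁻¹ = cartanProj g := by
  obtain ⟨k, hk, t, -, k', hk', rfl⟩ := exists_eq_mul_diagExp_mul g
  have : (k * diagExp t * k')⁻¹ = k'⁻¹ * diagExp (-t) * k⁻¹ := by rw [diagExp_neg]; group
  rw [this, cartanProj_mul_diagExp_mul (inv_mem hk') (inv_mem hk),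
    cartanProj_mul_diagExp_mul hk hk', abs_neg]

lemma cartanProj_mul_le (g h : SL2R) : cartanProj (g * h) ≤ cartanProj g + cartanProj h := by
  rw [cartanProj, cartanProj, cartanProj, ← log_mul (sl2OpNorm_pos g).ne' (sl2OpNorm_pos h).ne']
  exact log_le_log (sl2OpNorm_pos _) (sl2OpNorm_mul_le g h)

lemma abs_cartanProj_mul_sub_le (g h : SL2R) :
    |cartanProj (g * h) - cartanProj g| ≤ cartanProj h := by
  have := cartanProj_mul_le (g * h) h⁻¹
  rw [mul_inv_cancel_right, cartanProj_inv] at this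
  exact abs_sub_le_iff.2 ⟨by linarith [cartanProj_mul_le g h], by linarith⟩

lemma isCompact_setOf_cartanProj_le (C : ℝ) : IsCompact {g | cartanProj g ≤ C} := by
  simpa only [cartanProj, log_le_iff_le_exp (sl2OpNorm_pos _)] using
    isCompact_setOf_sl2OpNorm_le (exp C)

theorem exists_cartanProj_eq_abs_sub_and_mul_mul_inv_mem_SO2 (g₁ g₂ : SL2R) :
    ∃ x, cartanProj x = |cartanProj g₁ - cartanProj g₂| ∧ g₁ * x * g₂⁻¹ ∈ SO2 := by
  obtain ⟨k₁, hk₁, t₁, ht₁, k₁', hk₁', rfl⟩ := exists_eq_mul_diagExp_mul g₁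
  obtain ⟨k₂, hk₂, t₂, ht₂, k₂', hk₂', rfl⟩ := exists_eq_mul_diagExp_mul g₂
  refine ⟨k₁'⁻¹ * diagExp (t₂ - t₁) * k₂', ?_, ?_⟩
  · rw [cartanProj_mul_diagExp_mul (inv_mem hk₁') hk₂', cartanProj_mul_diagExp_mul hk₁ hk₁',
      cartanProj_mul_diagExp_mul hk₂ hk₂', abs_of_nonneg ht₁, abs_of_nonneg ht₂, abs_sub_comm]
  · have : k₁ * diagExp t₁ * k₁' * (k₁'⁻¹ * diagExp (t₂ - t₁) * k₂') * (k₂ * diagExp t₂ * k₂')⁻¹ =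
        k₁ * k₂⁻¹ := by
      rw [sub_eq_neg_add, diagExp_add, diagExp_neg]; group
    rw [this]
    exact mul_mem hk₁ (inv_mem hk₂)

noncomputable def cartanDiff (γ : SL2R × SL2R) : ℝ := cartanProj γ.1 - cartanProj γ.2

lemma abs_cartanDiff_mul_sub_le (γ δ : SL2R × SL2R) :
    |cartanDiff (γ * δ) - cartanDiff γ| ≤ cartanProj δ.1 + cartanProj δ.2 := by
  calc |cartanDiff (γ * δ) - cartanDiff γ|
      = |(cartanProj (γ.1 * δ.1) - cartanProj γ.1) -
          (cartanProj (γ.2 * δ.2) - cartanProj γ.2)| := by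
        rw [cartanDiff, cartanDiff, Prod.fst_mul, Prod.snd_mul]; ring_nf
    _ ≤ _ := (abs_sub _ _).trans
        (add_le_add (abs_cartanProj_mul_sub_le _ _) (abs_cartanProj_mul_sub_le _ _))

lemma cartanDiff_inv (γ : SL2R × SL2R) : cartanDiff γ⁻¹ = cartanDiff γ := by
  rw [cartanDiff, cartanDiff, Prod.fst_inv, Prod.snd_inv, cartanProj_inv, cartanProj_inv]

theorem tendsto_abs_cartanDiff_cofinite (Γ : Subgroup (SL2R × SL2R))
    (hproper : ∀ K L : Set SL2R, IsCompact K → IsCompact L →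
      {γ : Γ |
        ((fun g => (γ : SL2R × SL2R).1 * g * ((γ : SL2R × SL2R).2)⁻¹) '' K ∩ L).Nonempty}.Finite) :
    Tendsto (fun γ : Γ => |cartanDiff γ|) cofinite atTop := by
  refine tendsto_atTop.2 fun C => eventually_cofinite.2 <|
    (hproper _ _ (isCompact_setOf_cartanProj_le C) (isCompact_setOf_cartanProj_le 0)).subset ?_
  intro γ (hγ : ¬C ≤ |cartanDiff γ|)
  obtain ⟨x, hx, hmem⟩ :=
    exists_cartanProj_eq_abs_sub_and_mul_mul_inv_mem_SO2 (γ : SL2R × SL2R).1 (γ : SL2R × SL2R).2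
  exact ⟨_, ⟨x, hx.trans_le (not_le.1 hγ).le, rfl⟩, (cartanProj_of_mem_SO2 hmem).le⟩

end SL2R

theorem stmt_4_general (Γ : Subgroup (SL2R × SL2R))
    (hinforder : ∃ g ∈ Γ, ¬ IsOfFinOrder g)
    -- Γ acts properly discontinuously on SL₂(ℝ) by (γ₁,γ₂)·g = γ₁gγ₂⁻¹ :
    (hproper : ∀ K L : Set SL2R, IsCompact K → IsCompact L →
      {γ : Γ | ((fun g => (γ : SL2R × SL2R).1 * g * ((γ : SL2R × SL2R).2)⁻¹) '' K ∩ L).Nonempty}.Finite) :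
    {γ : SL2R × SL2R | γ ∈ Γ ∧ ¬ sl2OpNorm γ.2 < sl2OpNorm γ.1}.Finite ∨
    {γ : SL2R × SL2R | γ ∈ Γ ∧ ¬ sl2OpNorm γ.1 < sl2OpNorm γ.2}.Finite := by
  obtain ⟨g, hgΓ, hg⟩ := hinforder
  have hsign := finite_setOf_nonpos_or_finite_setOf_nonneg
    (f := fun γ : Γ => SL2R.cartanDiff γ)
    (N := fun δ : Γ => SL2R.cartanProj (δ : SL2R × SL2R).1 + SL2R.cartanProj (δ : SL2R × SL2R).2)
    (fun γ δ => SL2R.abs_cartanDiff_mul_sub_le γ δ) (fun γ => SL2R.cartanDiff_inv γ)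
    (SL2R.tendsto_abs_cartanDiff_cofinite Γ hproper) (g := ⟨g, hgΓ⟩)
    fun h => hg (Γ.subtype.isOfFinOrder h)
  refine hsign.imp (fun h => (h.image Subtype.val).subset ?_)
    (fun h => (h.image Subtype.val).subset ?_) <;> rintro γ ⟨hγ, hlt⟩
  · exact ⟨⟨γ, hγ⟩, sub_nonpos.2 (SL2R.cartanProj_le_cartanProj (not_lt.1 hlt)), rfl⟩
  · exact ⟨⟨γ, hγ⟩, sub_nonneg.2 (SL2R.cartanProj_le_cartanProj (not_lt.1 hlt)), rfl⟩

theorem stmt_4 (Γ : Subgroup (SL2R × SL2R))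
    (hdiscrete : DiscreteTopology Γ)
    (hinforder : ∃ g ∈ Γ, ¬ IsOfFinOrder g)
    -- Γ acts properly discontinuously on SL₂(ℝ) by (γ₁,γ₂)·g = γ₁gγ₂⁻¹ :
    (hproper : ∀ K L : Set SL2R, IsCompact K → IsCompact L →
      {γ : Γ | ((fun g => (γ : SL2R × SL2R).1 * g * ((γ : SL2R × SL2R).2)⁻¹) '' K ∩ L).Nonempty}.Finite) :
    {γ : SL2R × SL2R | γ ∈ Γ ∧ ¬ sl2OpNorm γ.2 < sl2OpNorm γ.1}.Finite ∨
    {γ : SL2R × SL2R | γ ∈ Γ ∧ ¬ sl2OpNorm γ.1 < sl2OpNorm γ.2}.Finite :=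
  stmt_4_general Γ hinforder hproper
end

section
/- For all g, g' ∈ SL_n(ℝ), the following two inequalities hold for the Euclidean norm on ℝⁿ: ‖μ(gg') − μ(g)‖ ≤ ‖μ(g')‖ and ‖μ(gg') − μ(g')‖ ≤ ‖μ(g)‖, where μ(g) = (log σ₁(g), …, log σ_n(g)) ∈ ℝⁿ. -/
/-!
STATEMENT 11: for g, g' ∈ SL_n(ℝ), ‖μ(gg') − μ(g)‖ ≤ ‖μ(g')‖ and
‖μ(gg') − μ(g')‖ ≤ ‖μ(g)‖ for the Euclidean norm on ℝⁿ, where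
μ(g) = (log σ₁(g), …, log σ_n(g)) is the vector of logarithms of the singular
values of g in decreasing order.
-/

open Matrix

/-- The Cartan projection μ(g) = (log σ₁(g), …, log σ_n(g)) ∈ ℝⁿ (0-indexed:
`cartanProj g i = log σ_{i+1}(g)`), where σ₁(g) ≥ … ≥ σ_n(g) are the singular
values of g, i.e. the square roots of the eigenvalues of gᵀg (= gᴴg over ℝ)
listed in decreasing order with multiplicity.  It is valued in `EuclideanSpace ℝ
(Fin n)`, i.e. ℝⁿ with the Euclidean norm. -/
noncomputable def cartanProj {n : ℕ} (g : Matrix (Fin n) (Fin n) ℝ) :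
    EuclideanSpace ℝ (Fin n) :=
  WithLp.toLp 2 fun i =>
    Real.log (Real.sqrt
      (((show (gᵀ * g).IsHermitian by
            simpa [Matrix.conjTranspose_eq_transpose_of_trivial] using
              Matrix.isHermitian_conjTranspose_mul_self g).eigenvalues ∘
        (Tuple.sort (show (gᵀ * g).IsHermitian by
            simpa [Matrix.conjTranspose_eq_transpose_of_trivial] using
              Matrix.isHermitian_conjTranspose_mul_self g).eigenvalues)) i.rev))

/-!
Write `s(g)` for the squared singular values of `g` in decreasing order, so that
`μ(g) = log s(g) / 2`; they are the diagonal entries of the quadratic form `v ↦ ‖g v‖²` in a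
suitable orthonormal basis, hence obey the Courant–Fischer comparison principle. The
Gelfand–Naimark inequality `∏_{i ∈ I} s_i(AB) ≤ ∏_{i ∈ I} s_i(B) · ∏_{j < #I} s_j(A)` says, after
taking logarithms, that every partial sum of `μ(AB) - μ(B)` is bounded by the top partial sum of
`μ(A)` with as many terms, with equality for the full sum since both are `log |det A|`. Such a
majorization bounds the sum of squares (Abel summation against the decreasing rearrangement),
which is the second inequality; the first follows from it by transposition, as `μ(gᵀ) = μ(g)`.
-/

open Finset
open scoped RealInnerProductSpace

theorem OrthonormalBasis.inner_eq_zero_of_mem_span_image {𝕜 ι E : Type*} [RCLike 𝕜]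
    [NormedAddCommGroup E] [InnerProductSpace 𝕜 E] [Fintype ι] (f : OrthonormalBasis ι 𝕜 E)
    {s : Set ι} {v : E} (hv : v ∈ Submodule.span 𝕜 (f '' s)) {i : ι} (hi : i ∉ s) :
    inner 𝕜 (f i) v = 0 := by
  rw [← f.coe_toBasis, f.toBasis.mem_span_image] at hv
  rw [← f.repr_apply_apply, ← f.coe_toBasis_repr_apply]
  by_contra h
  exact hi (hv (Finsupp.mem_support_iff.mpr h))

theorem Module.Basis.exists_ne_zero_mem_span_Iic_inf_Ici {K V : Type*} [Field K]
    [AddCommGroup V] [Module K V] {n : ℕ} (b₁ b₂ : Module.Basis (Fin n) K V) (k : Fin n) :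
    ∃ v ≠ 0, v ∈ Submodule.span K (b₁ '' Set.Iic k) ∧ v ∈ Submodule.span K (b₂ '' Set.Ici k) := by
  have := b₁.finiteDimensional_of_finite
  have hrank (b : Module.Basis (Fin n) K V) (s : Set (Fin n)) [Fintype s] :
      Module.finrank K (Submodule.span K (b '' s)) = Fintype.card s := by
    rw [Set.image_eq_range]
    exact finrank_span_eq_card (b.linearIndependent.comp _ Subtype.val_injective)
  have hmeet : Submodule.span K (b₁ '' Set.Iic k) ⊓ Submodule.span K (b₂ '' Set.Ici k) ≠ ⊥ := by
    intro h
    have := Submodule.finrank_add_finrank_le_of_disjoint (disjoint_iff.mpr h)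
    rw [hrank, hrank, Module.finrank_eq_card_basis b₁] at this
    simp only [mem_Iic, Set.mem_Iic, implies_true, Fintype.card_ofFinset, Fin.card_Iic, mem_Ici,
      Set.mem_Ici, Fin.card_Ici, Fintype.card_fin] at this
    omega
  obtain ⟨v, hv, hv0⟩ := Submodule.exists_mem_ne_zero_of_ne_bot hmeet
  exact ⟨v, hv0, Submodule.mem_inf.mp hv⟩

section DiagonalForm

variable {E : Type*} [NormedAddCommGroup E] [InnerProductSpace ℝ E] {n : ℕ}

def IsDiagonalIn (q : E → ℝ) (f : OrthonormalBasis (Fin n) ℝ E) (w : Fin n → ℝ) : Prop :=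
  ∀ v, q v = ∑ i, w i * ⟪f i, v⟫ ^ 2

theorem isDiagonalIn_inner_self_apply (S : E →ₗ[ℝ] E) (f : OrthonormalBasis (Fin n) ℝ E)
    (w : Fin n → ℝ) (hS : ∀ i, S (f i) = w i • f i) : IsDiagonalIn (fun v => ⟪v, S v⟫) f w := by
  intro v
  calc ⟪v, S v⟫ = ⟪v, S (∑ i, ⟪f i, v⟫ • f i)⟫ := by rw [f.sum_repr']
    _ = ∑ i, w i * ⟪f i, v⟫ ^ 2 := by
      simp only [map_sum, map_smul, hS, smul_smul, inner_sum, inner_smul_right, real_inner_comm v]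
      exact sum_congr rfl fun i _ => by ring

namespace IsDiagonalIn

variable {q q₁ q₂ : E → ℝ} {f f₁ f₂ : OrthonormalBasis (Fin n) ℝ E} {w w₁ w₂ : Fin n → ℝ}

theorem apply_basis (h : IsDiagonalIn q f w) (i : Fin n) : q (f i) = w i := by
  classical
  simp [h (f i), f.inner_eq_ite]

theorem mul_sq_norm_le (h : IsDiagonalIn q f w) (hw : Antitone w) {k : Fin n} {v : E}
    (hv : v ∈ Submodule.span ℝ (f '' Set.Iic k)) : w k * ‖v‖ ^ 2 ≤ q v := by
  rw [h v, ← f.sum_sq_inner_right v, mul_sum]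
  refine sum_le_sum fun i _ => ?_
  by_cases hi : i ≤ k
  · exact mul_le_mul_of_nonneg_right (hw hi) (sq_nonneg _)
  · simp [f.inner_eq_zero_of_mem_span_image hv hi]

theorem le_mul_sq_norm (h : IsDiagonalIn q f w) (hw : Antitone w) {k : Fin n} {v : E}
    (hv : v ∈ Submodule.span ℝ (f '' Set.Ici k)) : q v ≤ w k * ‖v‖ ^ 2 := by
  rw [h v, ← f.sum_sq_inner_right v, mul_sum]
  refine sum_le_sum fun i _ => ?_
  by_cases hi : k ≤ i
  · exact mul_le_mul_of_nonneg_right (hw hi) (sq_nonneg _)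
  · simp [f.inner_eq_zero_of_mem_span_image hv hi]

/-- Courant–Fischer: test both forms on a nonzero vector in the span of `f₁ 0, …, f₁ k` and of
`f₂ k, …, f₂ (n - 1)`, which exists since `(k + 1) + (n - k) > n`. -/
theorem mul_le_of_mul_le (h₁ : IsDiagonalIn q₁ f₁ w₁) (hw₁ : Antitone w₁)
    (h₂ : IsDiagonalIn q₂ f₂ w₂) (hw₂ : Antitone w₂) {c : ℝ} (hc : 0 ≤ c)
    (hq : ∀ v, c * q₁ v ≤ q₂ v) (k : Fin n) : c * w₁ k ≤ w₂ k := by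
  obtain ⟨v, hv0, hv₁, hv₂⟩ := f₁.toBasis.exists_ne_zero_mem_span_Iic_inf_Ici f₂.toBasis k
  rw [f₁.coe_toBasis] at hv₁
  rw [f₂.coe_toBasis] at hv₂
  refine le_of_mul_le_mul_right ?_ (by positivity : 0 < ‖v‖ ^ 2)
  calc c * w₁ k * ‖v‖ ^ 2 ≤ c * q₁ v := by
        rw [mul_assoc]; exact mul_le_mul_of_nonneg_left (h₁.mul_sq_norm_le hw₁ hv₁) hc
    _ ≤ q₂ v := hq v
    _ ≤ w₂ k * ‖v‖ ^ 2 := h₂.le_mul_sq_norm hw₂ hv₂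

theorem eq_of_antitone (h₁ : IsDiagonalIn q f₁ w₁) (hw₁ : Antitone w₁)
    (h₂ : IsDiagonalIn q f₂ w₂) (hw₂ : Antitone w₂) : w₁ = w₂ := by
  funext k
  have h₁₂ := h₁.mul_le_of_mul_le hw₁ h₂ hw₂ zero_le_one (fun v => (one_mul _).le) k
  have h₂₁ := h₂.mul_le_of_mul_le hw₂ h₁ hw₁ zero_le_one (fun v => (one_mul _).le) k
  rw [one_mul] at h₁₂ h₂₁
  exact le_antisymm h₁₂ h₂₁

end IsDiagonalIn

end DiagonalForm

theorem Matrix.isHermitian_transpose_mul_self {m k : Type*} [Fintype m] (g : Matrix m k ℝ) :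
    (gᵀ * g).IsHermitian := by
  simpa [conjTranspose_eq_transpose_of_trivial] using isHermitian_conjTranspose_mul_self g

theorem Matrix.sq_norm_toEuclideanLin_apply {m k : Type*} [Fintype m] [DecidableEq m] [Fintype k]
    [DecidableEq k] (g : Matrix m k ℝ) (v : EuclideanSpace ℝ k) :
    ‖toEuclideanLin g v‖ ^ 2 = ⟪v, toEuclideanLin (gᵀ * g) v⟫ := by
  rw [← real_inner_self_eq_norm_sq, toLpLin_mul_same, LinearMap.comp_apply,
    ← conjTranspose_eq_transpose_of_trivial, toEuclideanLin_conjTranspose_eq_adjoint,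
    LinearMap.adjoint_inner_right]

section SingularValues

variable {n : ℕ}

noncomputable def sqSingularValues (g : Matrix (Fin n) (Fin n) ℝ) : Fin n → ℝ := fun i =>
  (g.isHermitian_transpose_mul_self.eigenvalues ∘
    Tuple.sort g.isHermitian_transpose_mul_self.eigenvalues) i.rev

theorem cartanProj_eq_log_sqrt (g : Matrix (Fin n) (Fin n) ℝ) :
    cartanProj g = WithLp.toLp 2 fun i => Real.log (Real.sqrt (sqSingularValues g i)) :=
  rfl

theorem sqSingularValues_antitone (g : Matrix (Fin n) (Fin n) ℝ) :
    Antitone (sqSingularValues g) :=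
  fun _ _ hij => Tuple.monotone_sort _ (Fin.rev_le_rev.mpr hij)

theorem exists_isDiagonalIn_sqSingularValues (g : Matrix (Fin n) (Fin n) ℝ) :
    ∃ f, IsDiagonalIn (fun v => ‖toEuclideanLin g v‖ ^ 2) f (sqSingularValues g) := by
  set hg := g.isHermitian_transpose_mul_self
  refine ⟨hg.eigenvectorBasis.reindex (Fin.revPerm.trans (Tuple.sort hg.eigenvalues)).symm, ?_⟩
  simp only [sq_norm_toEuclideanLin_apply]
  refine isDiagonalIn_inner_self_apply _ _ _ fun i => ?_
  simp only [OrthonormalBasis.reindex_apply, Equiv.symm_symm, toLpLin_apply,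
    hg.mulVec_eigenvectorBasis]
  rfl

theorem IsDiagonalIn.sqSingularValues_eq {g : Matrix (Fin n) (Fin n) ℝ}
    {f : OrthonormalBasis (Fin n) ℝ (EuclideanSpace ℝ (Fin n))} {w : Fin n → ℝ}
    (h : IsDiagonalIn (fun v => ‖toEuclideanLin g v‖ ^ 2) f w) (hw : Antitone w) :
    sqSingularValues g = w := by
  obtain ⟨f', hf'⟩ := exists_isDiagonalIn_sqSingularValues g
  exact hf'.eq_of_antitone (sqSingularValues_antitone g) h hw

theorem mul_sqSingularValues_le {X Y : Matrix (Fin n) (Fin n) ℝ} {c : ℝ} (hc : 0 ≤ c)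
    (h : ∀ v, c * ‖toEuclideanLin X v‖ ^ 2 ≤ ‖toEuclideanLin Y v‖ ^ 2) (k : Fin n) :
    c * sqSingularValues X k ≤ sqSingularValues Y k := by
  obtain ⟨fX, hX⟩ := exists_isDiagonalIn_sqSingularValues X
  obtain ⟨fY, hY⟩ := exists_isDiagonalIn_sqSingularValues Y
  exact hX.mul_le_of_mul_le (sqSingularValues_antitone X) hY (sqSingularValues_antitone Y) hc h k

theorem sqSingularValues_transpose (g : Matrix (Fin n) (Fin n) ℝ) :
    sqSingularValues gᵀ = sqSingularValues g := by
  have h : gᵀ.isHermitian_transpose_mul_self.eigenvalues =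
      g.isHermitian_transpose_mul_self.eigenvalues := by
    rw [IsHermitian.eigenvalues_eq_eigenvalues_iff, transpose_transpose, charpoly_mul_comm]
  unfold sqSingularValues
  rw [h]

theorem prod_sqSingularValues (g : Matrix (Fin n) (Fin n) ℝ) :
    ∏ i, sqSingularValues g i = g.det ^ 2 := by
  have h := g.isHermitian_transpose_mul_self.det_eq_prod_eigenvalues
  rw [det_mul, det_transpose] at h
  rw [sq, h]
  exact Equiv.prod_comp (Fin.revPerm.trans (Tuple.sort _)) _

theorem sqSingularValues_nonneg (g : Matrix (Fin n) (Fin n) ℝ) (i : Fin n) :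
    0 ≤ sqSingularValues g i := by
  obtain ⟨f, hf⟩ := exists_isDiagonalIn_sqSingularValues g
  rw [← hf.apply_basis i]
  positivity

theorem sqSingularValues_pos {g : Matrix (Fin n) (Fin n) ℝ} (hg : g.det ≠ 0) (i : Fin n) :
    0 < sqSingularValues g i := by
  refine (sqSingularValues_nonneg g i).lt_of_ne' fun h => hg ?_
  have := prod_sqSingularValues g
  rw [prod_eq_zero (mem_univ i) h] at this
  exact pow_eq_zero_iff two_ne_zero |>.mp this.symm

theorem exists_isDiagonalIn_sq_norm_toEuclideanLin
    (f : OrthonormalBasis (Fin n) ℝ (EuclideanSpace ℝ (Fin n))) {w : Fin n → ℝ} (hw : 0 ≤ w) :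
    ∃ M : Matrix (Fin n) (Fin n) ℝ, IsDiagonalIn (fun v => ‖toEuclideanLin M v‖ ^ 2) f w := by
  refine ⟨toEuclideanLin.symm (f.repr.symm.toLinearMap ∘ₗ
    toEuclideanLin (diagonal fun i => Real.sqrt (w i)) ∘ₗ f.repr.toLinearMap), fun v => ?_⟩
  simp only [LinearEquiv.apply_symm_apply, LinearMap.comp_apply, LinearEquiv.coe_coe,
    LinearIsometryEquiv.coe_toLinearEquiv, LinearIsometryEquiv.norm_map,
    EuclideanSpace.real_norm_sq_eq, toLpLin_apply, mulVec_diagonal, f.repr_apply_apply]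
  exact sum_congr rfl fun i _ => by rw [mul_pow, Real.sq_sqrt (hw i)]

theorem pow_card_compl_mul_prod_sqSingularValues_mul_le {A B : Matrix (Fin n) (Fin n) ℝ}
    (hB : B.det ≠ 0) {c : ℝ} (hc : 0 < c) (I : Finset (Fin n)) :
    c ^ #Iᶜ * ∏ i ∈ I, sqSingularValues (A * B) i ≤
      (∏ i ∈ I, sqSingularValues B i) * ∏ j, max (sqSingularValues A j) c := by
  obtain ⟨f, hA⟩ := exists_isDiagonalIn_sqSingularValues A
  set t := fun j => max (sqSingularValues A j) c
  have ht : Antitone t := fun i j hij => max_le_max (sqSingularValues_antitone A hij) le_rfl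
  -- `A'` is `A` with its squared singular values below `c` raised to `c`: then `A' * B`
  -- dominates both `A * B` and `√c • B`, and `det A'` is still known.
  obtain ⟨A', hA'⟩ := exists_isDiagonalIn_sq_norm_toEuclideanLin f (w := t)
    fun j => (sqSingularValues_nonneg A j).trans (le_max_left _ _)
  have hAA' (u : EuclideanSpace ℝ (Fin n)) :
      ‖toEuclideanLin A u‖ ^ 2 ≤ ‖toEuclideanLin A' u‖ ^ 2 := by
    refine (hA u).trans_le ((sum_le_sum fun j _ => ?_).trans_eq (hA' u).symm)
    exact mul_le_mul_of_nonneg_right (le_max_left _ _) (sq_nonneg _)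
  have hcA' (u : EuclideanSpace ℝ (Fin n)) : c * ‖u‖ ^ 2 ≤ ‖toEuclideanLin A' u‖ ^ 2 := by
    rw [← f.sum_sq_inner_right u, mul_sum]
    refine (sum_le_sum fun j _ => ?_).trans_eq (hA' u).symm
    exact mul_le_mul_of_nonneg_right (le_max_right _ _) (sq_nonneg _)
  have hAB (i : Fin n) : sqSingularValues (A * B) i ≤ sqSingularValues (A' * B) i := by
    simpa using mul_sqSingularValues_le zero_le_one
      (fun v => by simpa using hAA' (toEuclideanLin B v)) i
  have hcB (i : Fin n) : c * sqSingularValues B i ≤ sqSingularValues (A' * B) i :=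
    mul_sqSingularValues_le hc.le (fun v => by simpa using hcA' (toEuclideanLin B v)) i
  have hprod : ∏ i, sqSingularValues (A' * B) i = (∏ j, t j) * ∏ i, sqSingularValues B i := by
    rw [prod_sqSingularValues, det_mul, mul_pow, ← prod_sqSingularValues,
      ← prod_sqSingularValues, hA'.sqSingularValues_eq ht]
  have hnonneg := sqSingularValues_nonneg (A' * B)
  have hcnonneg (i : Fin n) := mul_nonneg hc.le (sqSingularValues_nonneg B i)
  refine le_of_mul_le_mul_right ?_ (prod_pos fun i (_ : i ∈ Iᶜ) => sqSingularValues_pos hB i)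
  calc c ^ #Iᶜ * (∏ i ∈ I, sqSingularValues (A * B) i) * ∏ i ∈ Iᶜ, sqSingularValues B i
      = (∏ i ∈ I, sqSingularValues (A * B) i) * ∏ i ∈ Iᶜ, c * sqSingularValues B i := by
        rw [prod_mul_distrib, prod_const]; ring
    _ ≤ (∏ i ∈ I, sqSingularValues (A' * B) i) * ∏ i ∈ Iᶜ, sqSingularValues (A' * B) i :=
        mul_le_mul (prod_le_prod (fun i _ => sqSingularValues_nonneg _ i) fun i _ => hAB i)
          (prod_le_prod (fun i _ => hcnonneg i) fun i _ => hcB i)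
          (prod_nonneg fun i _ => hcnonneg i) (prod_nonneg fun i _ => hnonneg i)
    _ = (∏ i ∈ I, sqSingularValues B i) * (∏ j, t j) * ∏ i ∈ Iᶜ, sqSingularValues B i := by
        rw [prod_mul_prod_compl, hprod, ← prod_mul_prod_compl I (sqSingularValues B)]
        ring

theorem prod_sqSingularValues_mul_le {A B : Matrix (Fin n) (Fin n) ℝ} (hA : A.det ≠ 0)
    (hB : B.det ≠ 0) (I : Finset (Fin n)) :
    ∏ i ∈ I, sqSingularValues (A * B) i ≤
      (∏ i ∈ I, sqSingularValues B i) * ∏ j : Fin n with j.val < #I, sqSingularValues A j := by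
  rcases I.eq_empty_or_nonempty with rfl | hI
  · simp
  have hIn : #I ≤ n := by simpa using card_le_univ I
  have hk : #I - 1 < n := by have := hI.card_pos; omega
  set c := sqSingularValues A ⟨#I - 1, hk⟩
  have hc : 0 < c := sqSingularValues_pos hA _
  have hmax : ∏ j, max (sqSingularValues A j) c =
      (∏ j : Fin n with j.val < #I, sqSingularValues A j) * c ^ #Iᶜ := by
    rw [← prod_filter_mul_prod_filter_not univ (fun j : Fin n => j.val < #I)]
    congr 1
    · refine prod_congr rfl fun j hj => max_eq_left (sqSingularValues_antitone A ?_)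
      rw [mem_filter] at hj
      show j.val ≤ #I - 1
      omega
    · rw [prod_congr rfl fun j hj => max_eq_right (sqSingularValues_antitone A ?_), prod_const]
      · rw [filter_not, card_univ_sdiff, Fin.card_filter_val_lt, card_compl, Fintype.card_fin,
          min_eq_right hIn]
      · rw [mem_filter, not_lt] at hj
        show #I - 1 ≤ j.val
        omega
  have key := pow_card_compl_mul_prod_sqSingularValues_mul_le (A := A) hB hc I
  rw [hmax, mul_comm (c ^ _), ← mul_assoc] at key
  exact le_of_mul_le_mul_right key (pow_pos hc _)

end SingularValues

theorem sum_range_mul_nonneg_of_antitoneOn {u d : ℕ → ℝ} {N : ℕ}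
    (hu : AntitoneOn u (Set.Iio N)) (hd : ∀ k ≤ N, 0 ≤ ∑ i ∈ range k, d i)
    (hN : ∑ i ∈ range N, d i = 0) : 0 ≤ ∑ i ∈ range N, u i * d i := by
  have h := sum_range_by_parts u d N
  simp only [smul_eq_mul, hN, mul_zero, zero_sub] at h
  rw [h, neg_nonneg]
  refine sum_nonpos fun i hi => mul_nonpos_of_nonpos_of_nonneg (sub_nonpos.mpr ?_) (hd _ ?_)
  all_goals have := mem_range.mp hi
  · exact hu (Set.mem_Iio.mpr (by omega)) (Set.mem_Iio.mpr (by omega)) (Nat.le_succ i)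
  · omega

theorem sum_range_sq_le_of_sum_range_le {u y : ℕ → ℝ} {N : ℕ} (hu : AntitoneOn u (Set.Iio N))
    (hle : ∀ k ≤ N, ∑ i ∈ range k, u i ≤ ∑ i ∈ range k, y i)
    (heq : ∑ i ∈ range N, u i = ∑ i ∈ range N, y i) :
    ∑ i ∈ range N, u i ^ 2 ≤ ∑ i ∈ range N, y i ^ 2 := by
  have habel : 0 ≤ ∑ i ∈ range N, u i * (y i - u i) :=
    sum_range_mul_nonneg_of_antitoneOn hu
      (fun k hk => by rw [sum_sub_distrib]; linarith [hle k hk])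
      (by rw [sum_sub_distrib, heq, sub_self])
  have hsq : ∑ i ∈ range N, (y i ^ 2 - u i ^ 2) =
      ∑ i ∈ range N, (y i - u i) ^ 2 + 2 * ∑ i ∈ range N, u i * (y i - u i) := by
    rw [mul_sum, ← sum_add_distrib]
    exact sum_congr rfl fun i _ => by ring
  have : 0 ≤ ∑ i ∈ range N, (y i ^ 2 - u i ^ 2) := by
    rw [hsq]
    exact add_nonneg (sum_nonneg fun i _ => sq_nonneg _) (by linarith)
  rw [sum_sub_distrib] at this
  linarith

theorem Fin.sum_filter_val_lt {M : Type*} [AddCommMonoid M] {n k : ℕ} (f : ℕ → M)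
    (hk : k ≤ n) : ∑ i : Fin n with i.val < k, f i = ∑ m ∈ range k, f m := by
  have h : (univ.filter fun i : Fin n => i.val < k).map Fin.valEmbedding = range k := by
    ext m
    simp only [mem_map, mem_filter, mem_univ, true_and, Fin.valEmbedding_apply, mem_range]
    exact ⟨fun ⟨i, hi, him⟩ => him ▸ hi, fun hm => ⟨⟨m, by omega⟩, hm, rfl⟩⟩
  rw [← h, sum_map]
  rfl

theorem sum_sq_le_sum_sq_of_sum_le {n : ℕ} {x y : Fin n → ℝ}
    (hle : ∀ I : Finset (Fin n), ∑ i ∈ I, x i ≤ ∑ j : Fin n with j.val < #I, y j)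
    (heq : ∑ i, x i = ∑ i, y i) : ∑ i, x i ^ 2 ≤ ∑ i, y i ^ 2 := by
  set σ : Equiv.Perm (Fin n) := Fin.revPerm.trans (Tuple.sort x)
  set U : ℕ → ℝ := fun m => if h : m < n then x (σ ⟨m, h⟩) else 0
  set Y : ℕ → ℝ := fun m => if h : m < n then y ⟨m, h⟩ else 0
  have hU (i : Fin n) : U i = x (σ i) := dif_pos i.isLt
  have hY (i : Fin n) : Y i = y i := dif_pos i.isLt
  have hUanti : AntitoneOn U (Set.Iio n) := fun a ha b hb hab => by
    simp only [U, dif_pos (Set.mem_Iio.mp ha), dif_pos (Set.mem_Iio.mp hb)]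
    exact Tuple.monotone_sort x (Fin.rev_le_rev.mpr hab)
  have hpart (k : ℕ) (hk : k ≤ n) : ∑ m ∈ range k, U m ≤ ∑ m ∈ range k, Y m := by
    rw [← Fin.sum_filter_val_lt U hk, ← Fin.sum_filter_val_lt Y hk]
    simp only [hU, hY]
    have := hle ((univ.filter fun i : Fin n => i.val < k).map σ.toEmbedding)
    rwa [sum_map, card_map, Fin.card_filter_val_lt, min_eq_right hk] at this
  have hrange (f : ℕ → ℝ) : ∑ i : Fin n, f i = ∑ m ∈ range n, f m :=
    Fin.sum_univ_eq_sum_range f n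
  have := sum_range_sq_le_of_sum_range_le hUanti hpart (by
    rw [← hrange, ← hrange]
    simp only [hU, hY]
    rw [Equiv.sum_comp σ x, heq])
  rw [← hrange, ← hrange] at this
  simp only [hU, hY] at this
  rwa [Equiv.sum_comp σ (fun i => x i ^ 2)] at this

section CartanProjection

variable {n : ℕ}

theorem cartanProj_apply (g : Matrix (Fin n) (Fin n) ℝ) (i : Fin n) :
    cartanProj g i = Real.log (sqSingularValues g i) / 2 := by
  rw [cartanProj_eq_log_sqrt, PiLp.toLp_apply, Real.log_sqrt (sqSingularValues_nonneg g i)]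

theorem sum_cartanProj {g : Matrix (Fin n) (Fin n) ℝ} (hg : g.det ≠ 0) (I : Finset (Fin n)) :
    ∑ i ∈ I, cartanProj g i = Real.log (∏ i ∈ I, sqSingularValues g i) / 2 := by
  rw [Real.log_prod fun i _ => (sqSingularValues_pos hg i).ne', sum_div]
  exact sum_congr rfl fun i _ => cartanProj_apply g i

theorem cartanProj_transpose (g : Matrix (Fin n) (Fin n) ℝ) : cartanProj gᵀ = cartanProj g := by
  rw [cartanProj_eq_log_sqrt, cartanProj_eq_log_sqrt, sqSingularValues_transpose]

theorem norm_cartanProj_mul_sub_le {A B : Matrix (Fin n) (Fin n) ℝ} (hA : A.det ≠ 0)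
    (hB : B.det ≠ 0) : ‖cartanProj (A * B) - cartanProj B‖ ≤ ‖cartanProj A‖ := by
  have hAB : (A * B).det ≠ 0 := by rw [det_mul]; exact mul_ne_zero hA hB
  have hpos {g : Matrix (Fin n) (Fin n) ℝ} (hg : g.det ≠ 0) (I : Finset (Fin n)) :
      0 < ∏ i ∈ I, sqSingularValues g i :=
    prod_pos fun i _ => sqSingularValues_pos hg i
  have hle (I : Finset (Fin n)) : ∑ i ∈ I, (cartanProj (A * B) - cartanProj B) i ≤
      ∑ j : Fin n with j.val < #I, cartanProj A j := by
    have := Real.log_le_log (hpos hAB I) (prod_sqSingularValues_mul_le hA hB I)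
    rw [Real.log_mul (hpos hB I).ne' (hpos hA _).ne'] at this
    simp only [PiLp.sub_apply, sum_sub_distrib, sum_cartanProj hAB, sum_cartanProj hB,
      sum_cartanProj hA]
    linarith
  have heq : ∑ i, (cartanProj (A * B) - cartanProj B) i = ∑ i, cartanProj A i := by
    simp only [PiLp.sub_apply, sum_sub_distrib, sum_cartanProj hAB, sum_cartanProj hB,
      sum_cartanProj hA, prod_sqSingularValues, det_mul, mul_pow]
    rw [Real.log_mul (pow_ne_zero 2 hA) (pow_ne_zero 2 hB)]
    ring
  have := sum_sq_le_sum_sq_of_sum_le hle heq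
  rw [← EuclideanSpace.real_norm_sq_eq, ← EuclideanSpace.real_norm_sq_eq] at this
  exact (pow_le_pow_iff_left₀ (norm_nonneg _) (norm_nonneg _) two_ne_zero).mp this

end CartanProjection

theorem stmt_11 (n : ℕ) (g g' : SpecialLinearGroup (Fin n) ℝ) :
    ‖cartanProj ((g * g' : SpecialLinearGroup (Fin n) ℝ) : Matrix (Fin n) (Fin n) ℝ)
        - cartanProj (g : Matrix (Fin n) (Fin n) ℝ)‖
      ≤ ‖cartanProj (g' : Matrix (Fin n) (Fin n) ℝ)‖ ∧
    ‖cartanProj ((g * g' : SpecialLinearGroup (Fin n) ℝ) : Matrix (Fin n) (Fin n) ℝ)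
        - cartanProj (g' : Matrix (Fin n) (Fin n) ℝ)‖
      ≤ ‖cartanProj (g : Matrix (Fin n) (Fin n) ℝ)‖ := by
  refine ⟨?_, norm_cartanProj_mul_sub_le (by simp) (by simp)⟩
  have := norm_cartanProj_mul_sub_le (A := (g' : Matrix (Fin n) (Fin n) ℝ)ᵀ)
    (B := (g : Matrix (Fin n) (Fin n) ℝ)ᵀ) (by simp) (by simp)
  rwa [← transpose_mul, cartanProj_transpose, cartanProj_transpose, cartanProj_transpose] at this
end

section
/- Let x, y ∈ ℝⁿ satisfy x₁ ≥ x₂ ≥ … ≥ x_n ≥ 0 and y₁ ≥ y₂ ≥ … ≥ y_n ≥ 0. Then for every permutation σ of {1,…,n} and every choice of signs ε₁,…,ε_n ∈ {−1,+1}, one has ∑_{i=1}^n (x_i − y_i)² ≤ ∑_{i=1}^n (x_i − ε_i·y_{σ(i)})². -/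
/-!
Expanding the squares, both sides share `∑ xᵢ² + ∑ yᵢ²` (signs and permutations do not change
`∑ yᵢ²`), so the claim is `∑ xᵢ εᵢ y_{σ(i)} ≤ ∑ xᵢ yᵢ`. Dropping the signs can only increase the
left side since `x, y ≥ 0`, and then the rearrangement inequality applies, as `x` and `y` are
both decreasing.
-/

open Finset Equiv

section SignedPermutation

variable {ι R : Type*} [Fintype ι] [CommRing R]

lemma sum_sub_sq_eq (a b : ι → R) :
    ∑ i, (a i - b i) ^ 2 = ∑ i, a i ^ 2 - 2 * ∑ i, a i * b i + ∑ i, b i ^ 2 := by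
  simp only [sub_sq, sum_add_distrib, sum_sub_distrib, mul_sum, mul_assoc]

lemma sum_sign_mul_comp_perm_sq (y : ι → R) (σ : Perm ι) {ε : ι → R}
    (hε : ∀ i, ε i = -1 ∨ ε i = 1) :
    ∑ i, (ε i * y (σ i)) ^ 2 = ∑ i, y i ^ 2 := by
  have hε_sq (i : ι) : ε i ^ 2 = 1 := by rcases hε i with h | h <;> simp [h]
  simp only [mul_pow, hε_sq, one_mul]
  exact Equiv.sum_comp σ (fun i => y i ^ 2)

variable [LinearOrder R] [IsStrictOrderedRing R]

lemma sum_mul_sign_mul_le_sum_mul {x z ε : ι → R} (hx : ∀ i, 0 ≤ x i) (hz : ∀ i, 0 ≤ z i)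
    (hε : ∀ i, ε i ≤ 1) :
    ∑ i, x i * (ε i * z i) ≤ ∑ i, x i * z i :=
  sum_le_sum fun i _ => mul_le_mul_of_nonneg_left (mul_le_of_le_one_left (hz i) (hε i)) (hx i)

theorem Monovary.sum_sub_sq_le_sum_sub_sign_mul_comp_perm_sq {x y : ι → R} (hxy : Monovary x y)
    (hx : ∀ i, 0 ≤ x i) (hy : ∀ i, 0 ≤ y i) (σ : Perm ι) {ε : ι → R}
    (hε : ∀ i, ε i = -1 ∨ ε i = 1) :
    ∑ i, (x i - y i) ^ 2 ≤ ∑ i, (x i - ε i * y (σ i)) ^ 2 := by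
  have hε_le (i : ι) : ε i ≤ 1 := by rcases hε i with h | h <;> simp [h]
  have drop_signs := sum_mul_sign_mul_le_sum_mul hx (fun i => hy (σ i)) hε_le
  have rearrange := hxy.sum_mul_comp_perm_le_sum_mul (σ := σ)
  rw [sum_sub_sq_eq, sum_sub_sq_eq, sum_sign_mul_comp_perm_sq y σ hε]
  linarith

end SignedPermutation

theorem stmt_17 (n : ℕ) (x y : Fin n → ℝ)
    (hxmono : ∀ i j : Fin n, i ≤ j → x j ≤ x i) (hxnonneg : ∀ i, 0 ≤ x i)
    (hymono : ∀ i j : Fin n, i ≤ j → y j ≤ y i) (hynonneg : ∀ i, 0 ≤ y i)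
    (σ : Equiv.Perm (Fin n)) (ε : Fin n → ℝ) (hε : ∀ i, ε i = -1 ∨ ε i = 1) :
    ∑ i, (x i - y i) ^ 2 ≤ ∑ i, (x i - ε i * y (σ i)) ^ 2 :=
  (Antitone.monovary hxmono hymono).sum_sub_sq_le_sum_sub_sign_mul_comp_perm_sq
    hxnonneg hynonneg σ hε
end

section
/- Let p be a prime and k = 𝔽_p((t)) the field of formal Laurent series over the field with p elements. There exists a subgroup Γ of SL₂(k)×SL₂(k) with the following properties: Γ is infinite; Γ is discrete; every γ ∈ Γ satisfies γ^p = 1; Γ acts properly discontinuously on SL₂(k) by (γ₁,γ₂)·g = γ₁gγ₂⁻¹; both coordinate projections Γ → SL₂(k) have infinite kernel; and there are infinitely many (γ₁,γ₂) ∈ Γ with ‖γ₁‖ < ‖γ₂‖ as well as infinitely many (γ₁,γ₂) ∈ Γ with ‖γ₂‖ < ‖γ₁‖. -/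
/-!
STATEMENT 18: over k = 𝔽_p((t)), there is an infinite discrete subgroup Γ of
SL₂(k)×SL₂(k), of exponent p, acting properly discontinuously on SL₂(k) by
(γ₁,γ₂)·g = γ₁gγ₂⁻¹, whose two coordinate projections have infinite kernels, and
whose Cartan projections hit both sides of the diagonal infinitely often.
-/

open Matrix

/-- `SL₂(𝔽_p((t)))`, where 𝔽_p((t)) is formalized as `LaurentSeries (ZMod p)`. -/
abbrev SL2L (p : ℕ) [Fact p.Prime] := Matrix.SpecialLinearGroup (Fin 2) (LaurentSeries (ZMod p))

/-- The topology on SL₂(k) as a subset of the 2×2 matrices over k = 𝔽_p((t))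
(the topology on k being the t-adic valuation topology). -/
noncomputable instance (p : ℕ) [Fact p.Prime] : TopologicalSpace (SL2L p) :=
  TopologicalSpace.induced
    (fun g => (g : Matrix (Fin 2) (Fin 2) (LaurentSeries (ZMod p)))) inferInstance

-- The absolute value `|x| = p^(−v(x))` on `𝔽_p((t))`, where `v` is the t-adic
-- valuation (the order of vanishing at `t = 0`).
open Classical in
noncomputable def lAbs (p : ℕ) (x : LaurentSeries (ZMod p)) : ℝ :=
  if x = 0 then 0 else (p : ℝ) ^ (-(HahnSeries.order x))

/-- `‖g‖`: the maximum of the absolute values of the four entries of `g`. -/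
noncomputable def sl2LNorm (p : ℕ) [Fact p.Prime] (g : SL2L p) : ℝ :=
  max (max (lAbs p ((g : Matrix (Fin 2) (Fin 2) (LaurentSeries (ZMod p))) 0 0))
           (lAbs p ((g : Matrix (Fin 2) (Fin 2) (LaurentSeries (ZMod p))) 0 1)))
      (max (lAbs p ((g : Matrix (Fin 2) (Fin 2) (LaurentSeries (ZMod p))) 1 0))
           (lAbs p ((g : Matrix (Fin 2) (Fin 2) (LaurentSeries (ZMod p))) 1 1)))


/-!
Take `Γ = U(A) × U(B)`, where `U(a) = [1, a; 0, 1]` and `A`, `B` are the additive groups of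
Laurent polynomials in `t⁻¹` supported on the exponents `-2ⁿ` with `n` even, respectively odd.
Unipotent elements have order `p` in characteristic `p`, and `Γ` is discrete because every
nonzero element of `A` or `B` has absolute value `> 1`. If `U(a) g U(b)⁻¹ ∈ L` with `g ∈ K`, the
maximal entry valuation is submultiplicative and bounded on the compact sets `K`, `L`, `K⁻¹`,
`L⁻¹`, so `max(1, |a|)` and `max(1, |b|)` agree up to a factor `c`. Since `|a| = p^(2^s)` and
`|b| = p^(2^t)` with `s ≠ t`, and distinct powers of two are far apart, this forces
`|a|, |b| ≤ c²`, which leaves finitely many `(a, b)`.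
-/

namespace Matrix

variable {m n o R Γ₀ : Type*} [Fintype m] [Fintype n] [Fintype o]
  [Ring R] [LinearOrderedCommGroupWithZero Γ₀]

def supVal (v : Valuation R Γ₀) (A : Matrix m n R) : Γ₀ :=
  Finset.univ.sup fun ij : m × n => v (A ij.1 ij.2)

lemma supVal_le_iff {v : Valuation R Γ₀} {A : Matrix m n R} {c : Γ₀} :
    supVal v A ≤ c ↔ ∀ i j, v (A i j) ≤ c := by
  simp [supVal, Finset.sup_le_iff]

lemma valuation_le_supVal (v : Valuation R Γ₀) (A : Matrix m n R) (i : m) (j : n) :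
    v (A i j) ≤ supVal v A :=
  supVal_le_iff.mp le_rfl i j

lemma supVal_mul_le (v : Valuation R Γ₀) (A : Matrix m n R) (B : Matrix n o R) :
    supVal v (A * B) ≤ supVal v A * supVal v B :=
  supVal_le_iff.mpr fun i j => v.map_sum_le fun k _ => (v.map_mul _ _).trans_le <|
    mul_le_mul' (valuation_le_supVal v A i k) (valuation_le_supVal v B k j)

end Matrix

namespace Valued

variable {R Γ₀ : Type*} [Ring R] [LinearOrderedCommGroupWithZero Γ₀] [Valued R Γ₀]

lemma exists_valuation_le_of_isCompact {S : Set R} (hS : IsCompact S) :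
    ∃ c : Γ₀, ∀ x ∈ S, v x ≤ c := by
  obtain ⟨t, -, hcover⟩ := hS.elim_nhds_subcover (fun y => {x | v (x - y) ≤ 1}) fun y _ =>
    ((isOpen_integer R).preimage (continuous_sub_right y)).mem_nhds (by simp)
  refine ⟨t.sup fun y => max 1 (v y), fun x hx => ?_⟩
  obtain ⟨y, hy, hxy⟩ := Set.mem_iUnion₂.mp (hcover hx)
  calc v x = v (x - y + y) := by rw [sub_add_cancel]
    _ ≤ max (v (x - y)) (v y) := v.map_add _ _
    _ ≤ max 1 (v y) := max_le_max_right _ hxy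
    _ ≤ _ := Finset.le_sup (f := fun y => max 1 (v y)) hy

end Valued

lemma Matrix.exists_supVal_le_of_isCompact {m n R Γ₀ : Type*} [Fintype m] [Fintype n] [Ring R]
    [LinearOrderedCommGroupWithZero Γ₀] [Valued R Γ₀] {S : Set (Matrix m n R)}
    (hS : IsCompact S) : ∃ c : Γ₀, ∀ A ∈ S, supVal Valued.v A ≤ c := by
  choose c hc using fun ij : m × n => Valued.exists_valuation_le_of_isCompact <|
    hS.image (continuous_apply_apply ij.1 ij.2)
  exact ⟨Finset.univ.sup c, fun A hA => supVal_le_iff.mpr fun i j =>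
    (hc (i, j) _ ⟨A, hA, rfl⟩).trans (Finset.le_sup (Finset.mem_univ (i, j)))⟩

namespace Matrix.SpecialLinearGroup

open scoped MatrixGroups

section UpperRight

variable {R : Type*} [CommRing R]

def upperRightHom : AddChar R SL(2, R) where
  toFun a := ⟨!![1, a; 0, 1], by simp [det_fin_two_of]⟩
  map_zero_eq_one' := by ext : 1; simp [one_fin_two]
  map_add_eq_mul' a b := Subtype.ext <| by
    change _ = !![1, a; 0, 1] * !![1, b; 0, 1]
    simp [add_comm]

@[simp]
lemma coe_upperRightHom (a : R) :
    (upperRightHom a : Matrix (Fin 2) (Fin 2) R) = !![1, a; 0, 1] := rfl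

lemma upperRightHom_apply_zero_one (a : R) : upperRightHom a 0 1 = a := rfl

lemma injective_upperRightHom : Function.Injective (upperRightHom (R := R)) := fun a b h => by
  simpa only [upperRightHom_apply_zero_one] using congrArg (fun g : SL(2, R) => g 0 1) h

def upperRightSubgroup (A : AddSubgroup R) : Subgroup SL(2, R) where
  carrier := upperRightHom '' A
  mul_mem' := by
    rintro _ _ ⟨a, ha, rfl⟩ ⟨b, hb, rfl⟩
    exact ⟨a + b, A.add_mem ha hb, AddChar.map_add_eq_mul _ _ _⟩
  one_mem' := ⟨0, A.zero_mem, AddChar.map_zero_eq_one _⟩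
  inv_mem' := by
    rintro _ ⟨a, ha, rfl⟩
    exact ⟨-a, A.neg_mem ha, AddChar.map_neg_eq_inv _ _⟩

lemma eq_upperRightHom_of_mem {A : AddSubgroup R} {g : SL(2, R)}
    (hg : g ∈ upperRightSubgroup A) : g = upperRightHom (g 0 1) := by
  obtain ⟨a, -, rfl⟩ := hg
  rfl

lemma pow_char_eq_one_of_mem_prod_upperRightSubgroup (p : ℕ) [CharP R p] {A B : AddSubgroup R}
    {γ : SL(2, R) × SL(2, R)} (hγ : γ ∈ (upperRightSubgroup A).prod (upperRightSubgroup B)) :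
    γ ^ p = 1 := by
  have pow_char (a : R) : upperRightHom a ^ p = 1 := by
    rw [← AddChar.map_nsmul_eq_pow, nsmul_eq_mul, CharP.cast_eq_zero, zero_mul,
      AddChar.map_zero_eq_one]
  obtain ⟨⟨a, -, h₁⟩, ⟨b, -, h₂⟩⟩ := hγ
  exact Prod.ext (by rw [Prod.pow_fst, ← h₁, pow_char, Prod.fst_one])
    (by rw [Prod.pow_snd, ← h₂, pow_char, Prod.snd_one])

variable {Γ₀ : Type*} [LinearOrderedCommGroupWithZero Γ₀]

lemma supVal_upperRightHom (v : Valuation R Γ₀) (a : R) :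
    supVal v (upperRightHom a : Matrix (Fin 2) (Fin 2) R) = max 1 (v a) := by
  refine le_antisymm (supVal_le_iff.mpr fun i j => ?_) (max_le ?_ ?_)
  · fin_cases i <;> fin_cases j <;> simp
  · simpa using valuation_le_supVal v (upperRightHom a : Matrix (Fin 2) (Fin 2) R) 0 0
  · simpa using valuation_le_supVal v (upperRightHom a : Matrix (Fin 2) (Fin 2) R) 0 1

lemma max_one_valuation_le_of_eq_mul_mul (v : Valuation R Γ₀) {a b : R} {x y : SL(2, R)}
    (h : upperRightHom a = x * upperRightHom b * y) :
    max 1 (v a) ≤ supVal v (x : Matrix (Fin 2) (Fin 2) R) *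
      supVal v (y : Matrix (Fin 2) (Fin 2) R) * max 1 (v b) := by
  rw [← supVal_upperRightHom, ← supVal_upperRightHom, h, coe_mul, coe_mul,
    mul_right_comm _ (supVal v _)]
  exact (supVal_mul_le v _ _).trans (mul_le_mul' (supVal_mul_le v _ _) le_rfl)

end UpperRight

variable {n R Γ₀ : Type*} [Fintype n] [DecidableEq n] [CommRing R]
  [LinearOrderedCommGroupWithZero Γ₀] [Valued R Γ₀]

lemma exists_supVal_le_of_isCompact {S : Set (SpecialLinearGroup n R)} (hS : IsCompact S) :
    ∃ c : Γ₀, ∀ g ∈ S, supVal Valued.v (g : Matrix n n R) ≤ c ∧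
      supVal Valued.v ((g⁻¹ : SpecialLinearGroup n R) : Matrix n n R) ≤ c := by
  obtain ⟨c, hc⟩ := Matrix.exists_supVal_le_of_isCompact (hS.image continuous_subtype_val)
  obtain ⟨c', hc'⟩ := Matrix.exists_supVal_le_of_isCompact (hS.inv.image continuous_subtype_val)
  exact ⟨max c c', fun g hg => ⟨(hc _ ⟨g, hg, rfl⟩).trans (le_max_left _ _),
    (hc' _ ⟨g⁻¹, Set.inv_mem_inv.mpr hg, rfl⟩).trans (le_max_right _ _)⟩⟩

lemma discreteTopology_prod_upperRightSubgroup {A B : AddSubgroup R}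
    (hA : ∀ a ∈ A, Valued.v a ≤ 1 → a = 0) (hB : ∀ b ∈ B, Valued.v b ≤ 1 → b = 0) :
    DiscreteTopology ((upperRightSubgroup A).prod (upperRightSubgroup B)) := by
  rw [discreteTopology_iff_isOpen_singleton_one, isOpen_induced_iff]
  refine ⟨{γ : SL(2, R) × SL(2, R) | Valued.v (γ.1 0 1) ≤ 1 ∧ Valued.v (γ.2 0 1) ≤ 1}, ?_, ?_⟩
  · exact ((Valued.isOpen_integer R).preimage (by fun_prop)).inter
      ((Valued.isOpen_integer R).preimage (by fun_prop))
  · ext ⟨γ, hγ⟩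
    obtain ⟨⟨a, ha, h₁⟩, ⟨b, hb, h₂⟩⟩ := Subgroup.mem_prod.mp hγ
    have eq_one_iff : γ = 1 ↔ a = 0 ∧ b = 0 := by
      rw [Prod.ext_iff, ← h₁, ← h₂, Prod.fst_one, Prod.snd_one,
        ← AddChar.map_zero_eq_one upperRightHom, injective_upperRightHom.eq_iff,
        injective_upperRightHom.eq_iff]
    rw [Set.mem_singleton_iff, Subtype.ext_iff]
    change Valued.v (γ.1 0 1) ≤ 1 ∧ Valued.v (γ.2 0 1) ≤ 1 ↔ γ = 1
    rw [eq_one_iff, ← h₁, ← h₂, upperRightHom_apply_zero_one, upperRightHom_apply_zero_one]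
    exact ⟨fun h => ⟨hA a ha h.1, hB b hb h.2⟩, by rintro ⟨rfl, rfl⟩; simp⟩

end Matrix.SpecialLinearGroup

lemma HahnSeries.finite_setOf_support_subset {Γ R : Type*} [PartialOrder Γ] [Zero R] [Finite R]
    {T : Set Γ} (hT : T.Finite) : {x : HahnSeries Γ R | x.support ⊆ T}.Finite := by
  have := hT.to_subtype
  refine Set.Finite.of_finite_image (f := fun x (i : T) => x.coeff i) (Set.toFinite _) ?_
  intro x hx y hy hxy
  ext i
  by_cases hi : i ∈ T
  · exact congrFun hxy ⟨i, hi⟩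
  · have hxi : x.coeff i = 0 := by_contra fun h => hi (hx h)
    have hyi : y.coeff i = 0 := by_contra fun h => hi (hy h)
    rw [hxi, hyi]

lemma two_pow_le_two_mul_of_le_add {s t : ℕ} (hst : s ≠ t) {C : ℤ} (hs : 2 ^ s ≤ C + 2 ^ t)
    (ht : 2 ^ t ≤ C + 2 ^ s) : (2 : ℤ) ^ s ≤ 2 * C := by
  have hs₀ : (0 : ℤ) < 2 ^ s := by positivity
  rcases hst.lt_or_gt with h | h
  · have : (2 : ℤ) ^ (s + 1) ≤ 2 ^ t := pow_le_pow_right₀ one_le_two h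
    rw [pow_succ] at this
    linarith
  · have : (2 : ℤ) ^ (t + 1) ≤ 2 ^ s := pow_le_pow_right₀ one_le_two h
    rw [pow_succ] at this
    linarith

namespace LaurentSeries

open HahnSeries Matrix.SpecialLinearGroup WithZero
open scoped MatrixGroups

variable {K : Type*} [Field K]

instance (p : ℕ) [CharP K p] : CharP K⸨X⸩ p := charP_of_injective_ringHom C_injective p

theorem valuation_eq_exp_neg_order {f : K⸨X⸩} (hf : f ≠ 0) : Valued.v f = exp (-f.order) := by
  refine le_antisymm ?_ ?_
  · rw [valuation_le_iff_coeff_lt_eq_zero]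
    exact fun n hn => coeff_eq_zero_of_lt_order hn
  · have hv : Valued.v f ≠ 0 := (Valuation.ne_zero_iff _).mpr hf
    rw [← exp_log hv, exp_le_exp, neg_le]
    by_contra! h
    exact hf (coeff_order_eq_zero.mp ((valuation_le_iff_coeff_lt_log_eq_zero _ hv).mp le_rfl _ h))

variable (K) in
def lacunary (P : Set ℕ) : AddSubgroup K⸨X⸩ where
  carrier := {x | x.support ⊆ (fun n : ℕ => -(2 : ℤ) ^ n) '' P}
  zero_mem' := by simp
  add_mem' ha hb := (support_add_subset _ _).trans (Set.union_subset ha hb)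
  neg_mem' ha := support_neg.trans_subset ha

variable {P Q : Set ℕ}

lemma exists_valuation_eq_of_mem_lacunary {x : K⸨X⸩} (hx : x ∈ lacunary K P) (hx₀ : x ≠ 0) :
    ∃ n ∈ P, Valued.v x = exp ((2 : ℤ) ^ n) := by
  obtain ⟨n, hn, hxn⟩ := hx (coeff_order_eq_zero.not.mpr hx₀)
  exact ⟨n, hn, by rw [valuation_eq_exp_neg_order hx₀, ← hxn, neg_neg]⟩

lemma eq_zero_of_mem_lacunary_of_valuation_le_one {x : K⸨X⸩} (hx : x ∈ lacunary K P)
    (h : Valued.v x ≤ 1) : x = 0 := by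
  by_contra hx₀
  obtain ⟨n, -, hn⟩ := exists_valuation_eq_of_mem_lacunary hx hx₀
  rw [hn, ← exp_zero, exp_le_exp] at h
  exact h.not_gt (by positivity)

lemma finite_setOf_mem_lacunary_valuation_le [Finite K] (P : Set ℕ) (c : ℤᵐ⁰) :
    {x | x ∈ lacunary K P ∧ Valued.v x ≤ c}.Finite := by
  refine (finite_setOf_support_subset (Set.finite_Ico (-log c) 0)).subset ?_
  rintro x ⟨hx, hxc⟩ i hi
  obtain ⟨n, -, rfl⟩ := hx hi
  refine ⟨?_, by simp [pow_pos]⟩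
  have hc : c ≠ 0 := by
    rintro rfl
    rw [le_zero_iff, Valuation.zero_iff] at hxc
    simp [hxc] at hi
  by_contra! h
  exact hi ((valuation_le_iff_coeff_lt_log_eq_zero _ hc).mp hxc _ h)

lemma valuation_le_sq_of_comparable (hPQ : Disjoint P Q) {a b : K⸨X⸩} (ha : a ∈ lacunary K P)
    (hb : b ∈ lacunary K Q) {c : ℤᵐ⁰} (hab : max 1 (Valued.v a) ≤ c * max 1 (Valued.v b))
    (hba : max 1 (Valued.v b) ≤ c * max 1 (Valued.v a)) : Valued.v a ≤ c ^ 2 := by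
  rcases eq_or_ne a 0 with rfl | ha₀
  · simp
  rcases eq_or_ne b 0 with rfl | hb₀
  · simp only [map_zero, zero_le, max_eq_left, mul_one] at hab
    calc Valued.v a ≤ c := (le_max_right _ _).trans hab
      _ ≤ c ^ 2 := by
        rw [sq]
        exact le_mul_of_one_le_left' ((le_max_left _ _).trans hab)
  obtain ⟨s, hs, hva⟩ := exists_valuation_eq_of_mem_lacunary ha ha₀
  obtain ⟨t, ht, hvb⟩ := exists_valuation_eq_of_mem_lacunary hb hb₀
  have hc : c ≠ 0 := by
    rintro rfl
    simp at hab
  have max_one_exp (n : ℕ) : max 1 (exp ((2 : ℤ) ^ n)) = exp (2 ^ n) :=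
    max_eq_right (by rw [← exp_zero, exp_le_exp]; positivity)
  rw [hva, hvb, max_one_exp, max_one_exp, ← exp_log hc, ← exp_add, exp_le_exp] at hab hba
  rw [hva, ← exp_log hc, ← WithZero.exp_nsmul, exp_le_exp, two_nsmul]
  linarith [two_pow_le_two_mul_of_le_add (hPQ.ne_of_mem hs ht) hab hba]

variable (K P Q) in
noncomputable def lacunaryPair : Subgroup (SL(2, K⸨X⸩) × SL(2, K⸨X⸩)) :=
  (upperRightSubgroup (lacunary K P)).prod (upperRightSubgroup (lacunary K Q))

theorem discreteTopology_lacunaryPair : DiscreteTopology (lacunaryPair K P Q) :=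
  discreteTopology_prod_upperRightSubgroup
    (fun _ ha => eq_zero_of_mem_lacunary_of_valuation_le_one ha)
    (fun _ hb => eq_zero_of_mem_lacunary_of_valuation_le_one hb)

theorem finite_setOf_lacunaryPair_image_inter_nonempty [Finite K] (hPQ : Disjoint P Q)
    {S T : Set SL(2, K⸨X⸩)} (hS : IsCompact S) (hT : IsCompact T) :
    {γ : lacunaryPair K P Q | ((fun g => γ.val.1 * g * γ.val.2⁻¹) '' S ∩ T).Nonempty}.Finite := by
  obtain ⟨cS, hcS⟩ := exists_supVal_le_of_isCompact hS
  obtain ⟨cT, hcT⟩ := exists_supVal_le_of_isCompact hT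
  refine Set.Finite.of_finite_image (f := fun γ : lacunaryPair K P Q => (γ.val.1 0 1, γ.val.2 0 1))
    (((finite_setOf_mem_lacunary_valuation_le P ((cT * cS) ^ 2)).prod
      (finite_setOf_mem_lacunary_valuation_le Q ((cT * cS) ^ 2))).subset ?_) ?_
  · rintro _ ⟨⟨γ, ⟨a, ha, h₁⟩, ⟨b, hb, h₂⟩⟩, ⟨_, ⟨x, hx, rfl⟩, hl⟩, rfl⟩
    have hab : max 1 (Valued.v a) ≤ cT * cS * max 1 (Valued.v b) := by
      refine (max_one_valuation_le_of_eq_mul_mul Valued.v (x := γ.1 * x * γ.2⁻¹) (y := x⁻¹)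
        ?_).trans (mul_le_mul' (mul_le_mul' (hcT _ hl).1 (hcS x hx).2) le_rfl)
      rw [h₁, h₂]
      group
    have hba : max 1 (Valued.v b) ≤ cT * cS * max 1 (Valued.v a) := by
      refine (max_one_valuation_le_of_eq_mul_mul Valued.v (x := (γ.1 * x * γ.2⁻¹)⁻¹) (y := x)
        ?_).trans (mul_le_mul' (mul_le_mul' (hcT _ hl).2 (hcS x hx).1) le_rfl)
      rw [h₁, h₂]
      group
    change (γ.1 0 1, γ.2 0 1) ∈ _
    rw [← h₁, ← h₂, upperRightHom_apply_zero_one, upperRightHom_apply_zero_one]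
    exact ⟨⟨ha, valuation_le_sq_of_comparable hPQ ha hb hab hba⟩,
      ⟨hb, valuation_le_sq_of_comparable hPQ.symm hb ha hba hab⟩⟩
  · rintro ⟨γ, hγ₁, hγ₂⟩ - ⟨δ, hδ₁, hδ₂⟩ - h
    rw [Prod.mk.injEq] at h
    ext1
    exact Prod.ext
      (by rw [eq_upperRightHom_of_mem hγ₁, eq_upperRightHom_of_mem hδ₁, h.1])
      (by rw [eq_upperRightHom_of_mem hγ₂, eq_upperRightHom_of_mem hδ₂, h.2])

end LaurentSeries

section Norm

open LaurentSeries Matrix.SpecialLinearGroup HahnSeries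

variable (p : ℕ) [Fact p.Prime]

lemma lAbs_single_one (e : ℤ) : lAbs p (single e (1 : ZMod p)) = (p : ℝ) ^ (-e) := by
  rw [lAbs, if_neg (single_ne_zero one_ne_zero), order_single one_ne_zero]

lemma sl2LNorm_upperRightHom (a : LaurentSeries (ZMod p)) :
    sl2LNorm p (upperRightHom a) = max 1 (lAbs p a) := by
  have h₀ : lAbs p 0 = 0 := if_pos rfl
  have h₁ : lAbs p 1 = 1 := by rw [lAbs, if_neg one_ne_zero, order_one, neg_zero, zpow_zero]
  simp [sl2LNorm, h₀, h₁]

lemma sl2LNorm_one : sl2LNorm p 1 = 1 := by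
  simpa [lAbs] using sl2LNorm_upperRightHom p 0

variable {P Q : Set ℕ}

lemma infinite_setOf_mem_lacunary_one_lt_lAbs (hP : P.Infinite) :
    {a | a ∈ lacunary (ZMod p) P ∧ 1 < lAbs p a}.Infinite := by
  have hinj : Function.Injective fun n : ℕ => single (-(2 : ℤ) ^ n) (1 : ZMod p) :=
    fun m n h => by simpa using congrArg HahnSeries.order h
  refine (hP.image hinj.injOn).mono ?_
  rintro _ ⟨n, hn, rfl⟩
  refine ⟨support_single_subset.trans (Set.singleton_subset_iff.mpr ⟨n, hn, rfl⟩), ?_⟩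
  rw [lAbs_single_one, neg_neg]
  exact one_lt_zpow₀ (by exact_mod_cast (Fact.out : p.Prime).one_lt) (by positivity)

lemma infinite_setOf_mem_lacunaryPair_snd_eq_one (hP : P.Infinite) :
    {γ : SL2L p × SL2L p | γ ∈ lacunaryPair (ZMod p) P Q ∧ γ.2 = 1 ∧
      sl2LNorm p γ.2 < sl2LNorm p γ.1}.Infinite := by
  refine ((infinite_setOf_mem_lacunary_one_lt_lAbs p hP).image
    (f := fun a => ((upperRightHom a : SL2L p), (1 : SL2L p)))
    fun a _ b _ h => injective_upperRightHom (congrArg Prod.fst h)).mono ?_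
  rintro _ ⟨a, ⟨ha, h⟩, rfl⟩
  refine ⟨⟨⟨a, ha, rfl⟩, one_mem _⟩, rfl, ?_⟩
  rw [sl2LNorm_one, sl2LNorm_upperRightHom]
  exact lt_max_of_lt_right h

lemma infinite_setOf_mem_lacunaryPair_fst_eq_one (hQ : Q.Infinite) :
    {γ : SL2L p × SL2L p | γ ∈ lacunaryPair (ZMod p) P Q ∧ γ.1 = 1 ∧
      sl2LNorm p γ.1 < sl2LNorm p γ.2}.Infinite := by
  refine ((infinite_setOf_mem_lacunary_one_lt_lAbs p hQ).image
    (f := fun b => ((1 : SL2L p), (upperRightHom b : SL2L p)))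
    fun a _ b _ h => injective_upperRightHom (congrArg Prod.snd h)).mono ?_
  rintro _ ⟨b, ⟨hb, h⟩, rfl⟩
  refine ⟨⟨one_mem _, ⟨b, hb, rfl⟩⟩, rfl, ?_⟩
  rw [sl2LNorm_one, sl2LNorm_upperRightHom]
  exact lt_max_of_lt_right h

end Norm

theorem stmt_18 (p : ℕ) [Fact p.Prime] :
    ∃ Γ : Subgroup (SL2L p × SL2L p),
      -- Γ is infinite:
      (Γ : Set (SL2L p × SL2L p)).Infinite ∧
      -- Γ is discrete:
      DiscreteTopology Γ ∧
      -- every γ ∈ Γ satisfies γ^p = 1: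
      (∀ γ ∈ Γ, γ ^ p = 1) ∧
      -- Γ acts properly discontinuously on SL₂(k) by (γ₁,γ₂)·g = γ₁gγ₂⁻¹ :
      (∀ K L : Set (SL2L p), IsCompact K → IsCompact L →
        {γ : Γ | ((fun g => (γ : SL2L p × SL2L p).1 * g * ((γ : SL2L p × SL2L p).2)⁻¹) '' K ∩ L).Nonempty}.Finite) ∧
      -- the kernels of both coordinate projections are infinite:
      {γ : SL2L p × SL2L p | γ ∈ Γ ∧ γ.1 = 1}.Infinite ∧
      {γ : SL2L p × SL2L p | γ ∈ Γ ∧ γ.2 = 1}.Infinite ∧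
      -- both strict inequalities between the norms occur infinitely often:
      {γ : SL2L p × SL2L p | γ ∈ Γ ∧ sl2LNorm p γ.1 < sl2LNorm p γ.2}.Infinite ∧
      {γ : SL2L p × SL2L p | γ ∈ Γ ∧ sl2LNorm p γ.2 < sl2LNorm p γ.1}.Infinite := by
  have hEven : {n : ℕ | Even n}.Infinite :=
    Set.infinite_of_forall_exists_gt fun n => ⟨2 * n + 2, ⟨n + 1, by ring⟩, by omega⟩
  have hOdd : {n : ℕ | Odd n}.Infinite :=
    Set.infinite_of_forall_exists_gt fun n => ⟨2 * n + 1, odd_two_mul_add_one n, by omega⟩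
  have hdisj : Disjoint {n : ℕ | Even n} {n | Odd n} :=
    Set.disjoint_left.mpr fun n he ho => Nat.not_odd_iff_even.mpr he ho
  have hleft := infinite_setOf_mem_lacunaryPair_snd_eq_one p (Q := {n | Odd n}) hEven
  have hright := infinite_setOf_mem_lacunaryPair_fst_eq_one p (P := {n | Even n}) hOdd
  exact ⟨LaurentSeries.lacunaryPair (ZMod p) {n | Even n} {n | Odd n}, hleft.mono fun γ h => h.1,
    LaurentSeries.discreteTopology_lacunaryPair,
    fun γ hγ => Matrix.SpecialLinearGroup.pow_char_eq_one_of_mem_prod_upperRightSubgroup p hγ,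
    fun K L hK hL => LaurentSeries.finite_setOf_lacunaryPair_image_inter_nonempty hdisj hK hL,
    hright.mono fun γ h => ⟨h.1, h.2.1⟩, hleft.mono fun γ h => ⟨h.1, h.2.1⟩,
    hright.mono fun γ h => ⟨h.1, h.2.2⟩, hleft.mono fun γ h => ⟨h.1, h.2.2⟩⟩
end
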